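/- arXiv:2202.00865 — 3 statements merged into one kernel-verified Lean document; each statement's English description precedes it below -/
import Mathlib

section
/- If H_j is potentially optimal with constant K > 0, then for every i with d_i σ_i < d_j σ_j we have K ≥ (f_{H_j} − f_{H_i})/(d_j σ_j − d_i σ_i), and for every i with d_i σ_i > d_j σ_j we have K ≤ (f_{H_i} − f_{H_j})/(d_i σ_i − d_j σ_j). Consequently max_{i: d_iσ_i < d_jσ_j} (f_{H_j} − f_{H_i})/(d_jσ_j − d_iσ_i) ≤ min_{i: d_iσ_i > d_jσ_j} (f_{H_i} − f_{H_j})/(d_iσ_i − d_jσ_j). -/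
section SupportingLine

variable {𝕜 : Type*} [Field 𝕜] [LinearOrder 𝕜] [IsStrictOrderedRing 𝕜] {f₀ f a₀ a K : 𝕜}

theorem div_le_of_sub_mul_le_sub_mul (h : f₀ - K * a₀ ≤ f - K * a) (ha : a < a₀) :
    (f₀ - f) / (a₀ - a) ≤ K := by
  rw [div_le_iff₀ (sub_pos.mpr ha)]
  linarith

theorem le_div_of_sub_mul_le_sub_mul (h : f₀ - K * a₀ ≤ f - K * a) (ha : a₀ < a) :
    K ≤ (f - f₀) / (a - a₀) := by
  rw [le_div_iff₀ (sub_pos.mpr ha)]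
  linarith

end SupportingLine

theorem potentially_optimal_slope_bounds_general {I : Type*}
    (fH a : I → ℝ)
    (j : I) (K : ℝ)
    (h1 : ∀ i, fH j - K * a j ≤ fH i - K * a i) :
    (∀ i, a i < a j → (fH j - fH i) / (a j - a i) ≤ K) ∧
    (∀ i, a j < a i → K ≤ (fH i - fH j) / (a i - a j)) ∧
    (∀ i₁ i₂, a i₁ < a j → a j < a i₂ →
      (fH j - fH i₁) / (a j - a i₁) ≤ (fH i₂ - fH j) / (a i₂ - a j)) := by
  have lower : ∀ i, a i < a j → (fH j - fH i) / (a j - a i) ≤ K :=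
    fun i hi => div_le_of_sub_mul_le_sub_mul (h1 i) hi
  have upper : ∀ i, a j < a i → K ≤ (fH i - fH j) / (a i - a j) :=
    fun i hi => le_div_of_sub_mul_le_sub_mul (h1 i) hi
  exact ⟨lower, upper, fun i₁ i₂ h₁ h₂ => (lower i₁ h₁).trans (upper i₂ h₂)⟩

/-- If `H_j` is potentially optimal with constant `K > 0`, then for every `i` with
`a i < a j` (where `a i = d_i σ_i`) we have `K ≥ (f_{H_j} − f_{H_i})/(a j − a i)`,
for every `i` with `a i > a j` we have `K ≤ (f_{H_i} − f_{H_j})/(a i − a j)`, and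
consequently the max of the former slopes is at most the min of the latter ones. -/
theorem potentially_optimal_slope_bounds {I : Type*} [Fintype I]
    (fH a : I → ℝ) (ha : ∀ i, 0 < a i)
    (ε fmin fmed : ℝ) (hε : 0 < ε)
    (j : I) (K : ℝ) (hK : 0 < K)
    (h1 : ∀ i, fH j - K * a j ≤ fH i - K * a i)
    (h2 : fH j - K * a j ≤ fmin - ε * |fmin - fmed|) :
    (∀ i, a i < a j → (fH j - fH i) / (a j - a i) ≤ K) ∧
    (∀ i, a j < a i → K ≤ (fH i - fH j) / (a i - a j)) ∧
    (∀ i₁ i₂, a i₁ < a j → a j < a i₂ →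
      (fH j - fH i₁) / (a j - a i₁) ≤ (fH i₂ - fH j) / (a i₂ - a j)) :=
  potentially_optimal_slope_bounds_general fH a j K h1
end

section
/- Conversely, suppose (a) f_{H_j} ≤ f_{H_i} for all i with d_iσ_i = d_jσ_j; (b) max over i with d_iσ_i < d_jσ_j of g_i is ≤ min over i with d_iσ_i > d_jσ_j of g_i, where g_i = (f_{H_i} − f_{H_j})/(d_iσ_i − d_jσ_j); and (c) f_{H_j} ≤ d_jσ_j · min_{i: d_iσ_i > d_jσ_j} g_i + f_min − ε|f_min − f_median|. Then H_j is potentially optimal, i.e., there exists K > 0 satisfying both defining inequalities. -/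
/-!
Take `K` to be the smallest right slope `min_{a i > a j} g i`. Hypothesis (b) puts every left
slope below `K` and (a) handles ties, so the line of slope `K` through `(a j, fH j)` supports
all points `(a i, fH i)` from below; (c) is exactly the second defining inequality for this `K`.
-/

lemma sub_mul_le_sub_mul_of_div_le {x y u v K : ℝ} (huv : u < v)
    (h : (y - x) / (v - u) ≤ K) : y - K * v ≤ x - K * u := by
  rw [div_le_iff₀ (sub_pos.mpr huv)] at h
  linarith

lemma sub_mul_le_sub_mul_of_le_div {x y u v K : ℝ} (hvu : v < u)
    (h : K ≤ (x - y) / (u - v)) : y - K * v ≤ x - K * u := by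
  rw [le_div_iff₀ (sub_pos.mpr hvu)] at h
  linarith

lemma sub_mul_le_sub_mul_of_slope_bounds {I : Type*} (f a : I → ℝ) (j : I) (K : ℝ)
    (htie : ∀ i, a i = a j → f j ≤ f i)
    (hleft : ∀ i, a i < a j → (f j - f i) / (a j - a i) ≤ K)
    (hright : ∀ i, a j < a i → K ≤ (f i - f j) / (a i - a j)) (i : I) :
    f j - K * a j ≤ f i - K * a i := by
  rcases lt_trichotomy (a i) (a j) with hlt | heq | hgt
  · exact sub_mul_le_sub_mul_of_div_le hlt (hleft i hlt)
  · rw [heq]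
    linarith [htie i heq]
  · exact sub_mul_le_sub_mul_of_le_div hgt (hright i hgt)

open Finset in
theorem potentially_optimal_of_conditions_general {I : Type*} [Fintype I]
    (fH a : I → ℝ)
    (ε fmin fmed : ℝ)
    (j : I)
    (B : Finset I) (hBdef : B = Finset.univ.filter (fun i => a j < a i))
    (hB : B.Nonempty)
    (g : I → ℝ) (hg : ∀ i, g i = (fH i - fH j) / (a i - a j))
    (hpos : 0 < B.inf' hB g)
    (hA : ∀ i, a i = a j → fH j ≤ fH i)
    (hb : ∀ i₁ i₂, a i₁ < a j → a j < a i₂ →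
      (fH j - fH i₁) / (a j - a i₁) ≤ g i₂)
    (hc : fH j ≤ a j * B.inf' hB g + fmin - ε * |fmin - fmed|) :
    ∃ K > 0, (∀ i, fH j - K * a j ≤ fH i - K * a i) ∧
      fH j - K * a j ≤ fmin - ε * |fmin - fmed| := by
  have hmemB : ∀ i, i ∈ B ↔ a j < a i := by simp [hBdef]
  refine ⟨B.inf' hB g, hpos,
    sub_mul_le_sub_mul_of_slope_bounds fH a j _ hA ?_ ?_, by linarith⟩
  · exact fun i hi => le_inf' hB _ fun i₂ hi₂ => hb i i₂ hi ((hmemB i₂).mp hi₂)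
  · exact fun i hi => hg i ▸ inf'_le g ((hmemB i).mpr hi)

open Finset in
/-- Converse direction of the characterization of potentially optimal
hyper-rectangles: conditions (a), (b), (c) imply the existence of a constant
`K > 0` realizing potential optimality.  Here `a i` stands for `d_i σ_i`,
`g i = (f_{H_i} − f_{H_j})/(a i − a j)`, and (per the context) the set
`{i : a i > a j}` is nonempty with strictly positive minimal `g`-value. -/
theorem potentially_optimal_of_conditions {I : Type*} [Fintype I] [DecidableEq I]
    (fH a : I → ℝ) (ha : ∀ i, 0 < a i)
    (ε fmin fmed : ℝ) (hε : 0 < ε)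
    (j : I)
    (B : Finset I) (hBdef : B = Finset.univ.filter (fun i => a j < a i))
    (hB : B.Nonempty)
    (g : I → ℝ) (hg : ∀ i, g i = (fH i - fH j) / (a i - a j))
    (hpos : 0 < B.inf' hB g)
    (hA : ∀ i, a i = a j → fH j ≤ fH i)
    (hb : ∀ i₁ i₂, a i₁ < a j → a j < a i₂ →
      (fH j - fH i₁) / (a j - a i₁) ≤ g i₂)
    (hc : fH j ≤ a j * B.inf' hB g + fmin - ε * |fmin - fmed|) :
    ∃ K > 0, (∀ i, fH j - K * a j ≤ fH i - K * a i) ∧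
      fH j - K * a j ≤ fmin - ε * |fmin - fmed| :=
  potentially_optimal_of_conditions_general fH a ε fmin fmed j B hBdef hB g hg hpos hA hb hc
end

section
/- Suppose in an infinite process each step selects some element from a finite multiset of hyper-rectangles, and whenever a hyper-rectangle of maximal weight d_jσ_j is selected it is replaced by finitely many hyper-rectangles each of volume at most one third of its own, with weights σ bounded in [ε_σ, 1]. If the largest-diameter rectangles are selected infinitely often, then the minimum number of divisions l_t undergone by any hyper-rectangle at iteration t tends to infinity as t → ∞. -/
/-!
Induct on the level `r`. Once every box has division count at least `r`, dividing a box never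
creates a box of count `r`, so the number of boxes of count `r` is eventually antitone, hence
eventually constant. Whenever a box of minimal count is divided while boxes of count `r` remain,
the divided box has count `r` and that number drops; as this happens infinitely often, it must
eventually be zero, i.e. every box then has count at least `r + 1`.
-/

open Filter Multiset

theorem Filter.Eventually.eq_bot_of_frequently_lt {α : Type*} [PartialOrder α] [OrderBot α]
    [WellFoundedLT α] {f : ℕ → α} (hf : ∀ᶠ n in atTop, f (n + 1) ≤ f n)
    (hlt : ∃ᶠ n in atTop, f n ≠ ⊥ → f (n + 1) < f n) : ∀ᶠ n in atTop, f n = ⊥ := by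
  obtain ⟨N, hN⟩ := eventually_atTop.1 hf
  have hanti : Antitone fun k => f (N + k) :=
    antitone_nat_of_succ_le fun k => hN (N + k) (Nat.le_add_right N k)
  obtain ⟨n, hn⟩ := WellFoundedLT.antitone_chain_condition hanti
  obtain ⟨k, hk, hdec⟩ := frequently_atTop.1 hlt (N + n)
  have hconst : ∀ j ≥ N + n, f j = f (N + n) := fun j hj => by
    simpa [Nat.add_sub_cancel' (le_of_add_le_left hj)] using (hn (j - N) (by omega)).symm
  have hbot : f k = ⊥ := by
    by_contra hne
    have := hdec hne
    rw [hconst k hk, hconst (k + 1) (by omega)] at this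
    exact lt_irrefl _ this
  exact eventually_atTop.2 ⟨N + n, fun j hj => (hconst j hj).trans ((hconst k hk).symm.trans hbot)⟩

section DivisionStep

variable {α : Type*} [LinearOrder α] {s D : Multiset α} {a r : α}

theorem count_erase_add_le_of_le (hr : r ≤ a) (hD : ∀ x ∈ D, a < x) :
    count r (s.erase a + D) ≤ count r s := by
  have hrD : count r D = 0 := count_eq_zero.2 fun hmem => (hr.trans_lt (hD r hmem)).false
  rw [count_add, hrD, add_zero]
  exact count_le_of_le r (erase_le a s)

theorem count_erase_add_lt (ha : a ∈ s) (hD : ∀ x ∈ D, a < x) :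
    count a (s.erase a + D) < count a s := by
  have haD : count a D = 0 := count_eq_zero.2 fun hmem => (hD a hmem).false
  rw [count_add, haD, add_zero, count_erase_self]
  exact Nat.sub_lt (count_pos.2 ha) Nat.one_pos

end DivisionStep

theorem eventually_forall_mem_lt_of_eventually_le {α : Type*} [LinearOrder α]
    {c : ℕ → Multiset α} {m : ℕ → α} {r : α}
    (hstep : ∀ t, m t ∈ c t ∧ ∃ D : Multiset α, (∀ x ∈ D, m t < x) ∧
      c (t + 1) = (c t).erase (m t) + D)
    (hmin : ∃ᶠ t in atTop, ∀ x ∈ c t, m t ≤ x)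
    (hr : ∀ᶠ t in atTop, ∀ x ∈ c t, r ≤ x) :
    ∀ᶠ t in atTop, ∀ x ∈ c t, r < x := by
  have hanti : ∀ᶠ t in atTop, count r (c (t + 1)) ≤ count r (c t) := hr.mono fun t hrt => by
    obtain ⟨hm, D, hD, hc⟩ := hstep t
    rw [hc]
    exact count_erase_add_le_of_le (hrt _ hm) hD
  have hdec : ∃ᶠ t in atTop, count r (c t) ≠ ⊥ → count r (c (t + 1)) < count r (c t) := by
    refine (hmin.and_eventually hr).mono fun t ⟨hmt, hrt⟩ hne => ?_
    obtain ⟨hm, D, hD, hc⟩ := hstep t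
    have hmem : r ∈ c t := count_ne_zero.1 hne
    obtain rfl : m t = r := le_antisymm (hmt r hmem) (hrt _ hm)
    rw [hc]
    exact count_erase_add_lt hm hD
  filter_upwards [hr, hanti.eq_bot_of_frequently_lt hdec] with t hrt hzero x hx
  exact (hrt x hx).lt_of_ne fun hxr => count_eq_zero.1 hzero (hxr ▸ hx)

/-- Abstract StepDIRECT division process, recorded via division counts: `c t` is the
multiset of division counts of the boxes at iteration `t`, and at each step the box
with count `m t` is replaced by a nonempty finite collection of boxes with strictly
larger division counts (each division multiplies volume by at most `1/3`).  If
boxes of minimal division count (equivalently, of largest diameter) are divided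
infinitely often, then the minimum division count tends to infinity: no division
level survives forever. -/
theorem min_division_count_tendsto_top
    (c : ℕ → Multiset ℕ) (m : ℕ → ℕ)
    (hstep : ∀ t, m t ∈ c t ∧ ∃ D : Multiset ℕ, D ≠ 0 ∧ (∀ x ∈ D, m t < x) ∧
      c (t + 1) = (c t).erase (m t) + D)
    (hmin : ∀ t, ∃ t' ≥ t, ∀ x ∈ c t', m t' ≤ x) :
    ∀ r : ℕ, ∃ T : ℕ, ∀ t ≥ T, ∀ x ∈ c t, r ≤ x := by
  have hstep' : ∀ t, m t ∈ c t ∧ ∃ D : Multiset ℕ, (∀ x ∈ D, m t < x) ∧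
      c (t + 1) = (c t).erase (m t) + D := fun t =>
    let ⟨hm, D, _, hD, hc⟩ := hstep t
    ⟨hm, D, hD, hc⟩
  intro r
  rw [← eventually_atTop]
  induction r with
  | zero => exact Eventually.of_forall fun _ x _ => Nat.zero_le x
  | succ r ih => exact eventually_forall_mem_lt_of_eventually_le hstep' (frequently_atTop.2 hmin) ih
end
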